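/- arXiv:1502.00594 — 3 statements merged into one kernel-verified Lean document; each statement's English description precedes it below -/
import Mathlib

section
/- Let N ≥ 2 be an integer, let B be the open unit ball in ℝ^N and let 2B = {x : ‖x‖ < 2}. If U ⊆ ℝ^N is a measurable set with vol(U) = vol(B), then ∫_U ‖x‖ dx ≥ ∫_B ‖x‖ dx + vol(U ∖ 2B). -/
open MeasureTheory
open scoped ENNReal

/-- If `U ⊆ ℝ^N` has the same volume as the unit ball `B`, then
`∫_U ‖x‖ dx ≥ ∫_B ‖x‖ dx + vol(U ∖ 2B)`. -/
theorem integral_norm_ge_of_volume_eq_unit_ball (N : ℕ) (hN : 2 ≤ N)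
    (U : Set (EuclideanSpace ℝ (Fin N))) (hU : MeasurableSet U)
    (hvol : volume U = volume (Metric.ball (0 : EuclideanSpace ℝ (Fin N)) 1)) :
    (∫⁻ x in Metric.ball (0 : EuclideanSpace ℝ (Fin N)) 1, (‖x‖₊ : ℝ≥0∞) ∂volume) +
        volume (U \ Metric.ball (0 : EuclideanSpace ℝ (Fin N)) 2) ≤
      ∫⁻ x in U, (‖x‖₊ : ℝ≥0∞) ∂volume := by
  set B := Metric.ball (0 : EuclideanSpace ℝ (Fin N)) 1 with hBdef
  set D := Metric.ball (0 : EuclideanSpace ℝ (Fin N)) 2 with hDdef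
  have hBm : MeasurableSet B := measurableSet_ball
  have hDm : MeasurableSet D := measurableSet_ball
  have hBD : B ⊆ D := Metric.ball_subset_ball (by norm_num)
  have hUBfin : volume (U ∩ B) ≠ ∞ :=
    ((measure_mono Set.inter_subset_right).trans_lt measure_ball_lt_top).ne
  -- measure equality vol(B \ U) = vol(U \ B)
  have hmeq : volume (B \ U) = volume (U \ B) := by
    have h1 : volume (U ∩ B) + volume (U \ B) = volume U := measure_inter_add_diff (μ := volume) U hBm
    have h2 : volume (U ∩ B) + volume (B \ U) = volume B := by
      have := measure_inter_add_diff (μ := volume) B hU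
      rwa [Set.inter_comm] at this
    have h3 : volume (U ∩ B) + volume (B \ U) = volume (U ∩ B) + volume (U \ B) := by
      rw [h2, h1, hvol]
    exact (ENNReal.add_right_inj hUBfin).mp h3
  -- splitting integrals
  have hsplitB : ∫⁻ x in U ∩ B, (‖x‖₊ : ℝ≥0∞) ∂volume
      + ∫⁻ x in B \ U, (‖x‖₊ : ℝ≥0∞) ∂volume = ∫⁻ x in B, (‖x‖₊ : ℝ≥0∞) ∂volume := by
    have := lintegral_inter_add_diff (μ := volume)
      (f := fun x : EuclideanSpace ℝ (Fin N) => (‖x‖₊ : ℝ≥0∞)) (B := U) B hU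
    rwa [Set.inter_comm] at this
  have hsplitU : ∫⁻ x in U ∩ B, (‖x‖₊ : ℝ≥0∞) ∂volume
      + ∫⁻ x in U \ B, (‖x‖₊ : ℝ≥0∞) ∂volume = ∫⁻ x in U, (‖x‖₊ : ℝ≥0∞) ∂volume :=
    lintegral_inter_add_diff (μ := volume)
      (f := fun x : EuclideanSpace ℝ (Fin N) => (‖x‖₊ : ℝ≥0∞)) (B := B) U hBm
  have hUBD : (U \ B) \ D = U \ D := by
    rw [Set.diff_diff, Set.union_eq_self_of_subset_left hBD]
  have hsplitUB : ∫⁻ x in (U \ B) ∩ D, (‖x‖₊ : ℝ≥0∞) ∂volume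
      + ∫⁻ x in U \ D, (‖x‖₊ : ℝ≥0∞) ∂volume = ∫⁻ x in U \ B, (‖x‖₊ : ℝ≥0∞) ∂volume := by
    have := lintegral_inter_add_diff (μ := volume)
      (f := fun x : EuclideanSpace ℝ (Fin N) => (‖x‖₊ : ℝ≥0∞)) (B := D) (U \ B) hDm
    rwa [hUBD] at this
  have hmsplit : volume ((U \ B) ∩ D) + volume (U \ D) = volume (U \ B) := by
    have := measure_inter_add_diff (μ := volume) (U \ B) hDm
    rwa [hUBD] at this
  -- bound on B \ U : integrand ≤ 1
  have hBU_le : ∫⁻ x in B \ U, (‖x‖₊ : ℝ≥0∞) ∂volume ≤ volume (B \ U) := by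
    calc ∫⁻ x in B \ U, (‖x‖₊ : ℝ≥0∞) ∂volume
        ≤ ∫⁻ _ in B \ U, (1 : ℝ≥0∞) ∂volume := by
          refine setLIntegral_mono' (hBm.diff hU) fun x hx => ?_
          have hx1 : ‖x‖ ≤ 1 := (mem_ball_zero_iff.mp hx.1).le
          have : ‖x‖₊ ≤ 1 := by exact_mod_cast hx1
          exact_mod_cast this
      _ = volume (B \ U) := setLIntegral_one _
  -- lower bound on (U \ B) ∩ D : integrand ≥ 1
  have h1le : volume ((U \ B) ∩ D) ≤ ∫⁻ x in (U \ B) ∩ D, (‖x‖₊ : ℝ≥0∞) ∂volume := by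
    calc volume ((U \ B) ∩ D) = ∫⁻ _ in (U \ B) ∩ D, (1 : ℝ≥0∞) ∂volume :=
          (setLIntegral_one _).symm
      _ ≤ ∫⁻ x in (U \ B) ∩ D, (‖x‖₊ : ℝ≥0∞) ∂volume := by
          refine setLIntegral_mono' ((hU.diff hBm).inter hDm) fun x hx => ?_
          have hx1 : 1 ≤ ‖x‖ := by
            have := hx.1.2
            simpa [hBdef, mem_ball_zero_iff, not_lt] using this
          have : (1 : NNReal) ≤ ‖x‖₊ := by exact_mod_cast hx1
          exact_mod_cast this
  -- lower bound on U \ D : integrand ≥ 2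
  have h2le : volume (U \ D) + volume (U \ D) ≤ ∫⁻ x in U \ D, (‖x‖₊ : ℝ≥0∞) ∂volume := by
    calc volume (U \ D) + volume (U \ D) = ∫⁻ _ in U \ D, (2 : ℝ≥0∞) ∂volume := by
          rw [setLIntegral_const]; ring
      _ ≤ ∫⁻ x in U \ D, (‖x‖₊ : ℝ≥0∞) ∂volume := by
          refine setLIntegral_mono' (hU.diff hDm) fun x hx => ?_
          have hx1 : 2 ≤ ‖x‖ := by
            have := hx.2
            simpa [hDdef, mem_ball_zero_iff, not_lt] using this
          have : (2 : NNReal) ≤ ‖x‖₊ := by exact_mod_cast hx1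
          exact_mod_cast this
  calc (∫⁻ x in B, (‖x‖₊ : ℝ≥0∞) ∂volume) + volume (U \ D)
      = (∫⁻ x in U ∩ B, (‖x‖₊ : ℝ≥0∞) ∂volume
          + ∫⁻ x in B \ U, (‖x‖₊ : ℝ≥0∞) ∂volume) + volume (U \ D) := by rw [hsplitB]
    _ ≤ (∫⁻ x in U ∩ B, (‖x‖₊ : ℝ≥0∞) ∂volume + volume (B \ U)) + volume (U \ D) := by
        gcongr
    _ = ∫⁻ x in U ∩ B, (‖x‖₊ : ℝ≥0∞) ∂volume
          + ((volume ((U \ B) ∩ D) + volume (U \ D)) + volume (U \ D)) := by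
        rw [hmeq, ← hmsplit]; ring
    _ ≤ ∫⁻ x in U ∩ B, (‖x‖₊ : ℝ≥0∞) ∂volume
          + (∫⁻ x in (U \ B) ∩ D, (‖x‖₊ : ℝ≥0∞) ∂volume
            + (volume (U \ D) + volume (U \ D))) := by
        rw [add_assoc]; gcongr
    _ ≤ ∫⁻ x in U ∩ B, (‖x‖₊ : ℝ≥0∞) ∂volume
          + (∫⁻ x in (U \ B) ∩ D, (‖x‖₊ : ℝ≥0∞) ∂volume
            + ∫⁻ x in U \ D, (‖x‖₊ : ℝ≥0∞) ∂volume) := by gcongr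
    _ = ∫⁻ x in U, (‖x‖₊ : ℝ≥0∞) ∂volume := by rw [hsplitUB, hsplitU]
end

section
/- Let N ≥ 2 be an integer, let B be the open unit ball in ℝ^N, and let 0 < a < b. Let U ⊆ ℝ^N be an open set and define T = {r ∈ (a, b) : the sphere {x ∈ ℝ^N : ‖x‖ = r} is contained in U}. Then T is measurable (indeed open) and vol(U) ≥ N · vol(B) · a^{N−1} · λ(T), where λ denotes one-dimensional Lebesgue measure. -/
open MeasureTheory
open scoped ENNReal

/-- Polar-coordinates estimate: if `U ⊆ ℝ^N` is open and `T` is the set of radii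
`r ∈ (a, b)` (with `0 < a < b`) for which the whole sphere of radius `r` is contained
in `U`, then `T` is measurable and `vol(U) ≥ N · vol(B) · a^(N-1) · λ(T)`. -/
theorem volume_ge_of_spheres_subset (N : ℕ) (hN : 2 ≤ N) (a b : ℝ) (ha : 0 < a) (hab : a < b)
    (U : Set (EuclideanSpace ℝ (Fin N))) (hU : IsOpen U) :
    MeasurableSet {r : ℝ | r ∈ Set.Ioo a b ∧
        Metric.sphere (0 : EuclideanSpace ℝ (Fin N)) r ⊆ U} ∧
      (N : ℝ≥0∞) * volume (Metric.ball (0 : EuclideanSpace ℝ (Fin N)) 1) *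
          ENNReal.ofReal (a ^ (N - 1)) *
          volume {r : ℝ | r ∈ Set.Ioo a b ∧
            Metric.sphere (0 : EuclideanSpace ℝ (Fin N)) r ⊆ U} ≤
        volume U := by
  haveI : Nonempty (Fin N) := ⟨⟨0, by omega⟩⟩
  set T : Set ℝ := {r : ℝ | r ∈ Set.Ioo a b ∧
      Metric.sphere (0 : EuclideanSpace ℝ (Fin N)) r ⊆ U} with hTdef
  -- T is open
  have hTopen : IsOpen T := by
    rw [Metric.isOpen_iff]
    rintro r ⟨⟨har, hrb⟩, hsub⟩
    have hr0 : 0 < r := ha.trans har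
    obtain ⟨δ, hδ, hthick⟩ :=
      (isCompact_sphere (0 : EuclideanSpace ℝ (Fin N)) r).exists_thickening_subset_open hU hsub
    refine ⟨min δ (min (r - a) (b - r)),
      lt_min hδ (lt_min (sub_pos.2 har) (sub_pos.2 hrb)), fun r' hr' => ?_⟩
    rw [Metric.mem_ball, Real.dist_eq] at hr'
    have h1 : |r' - r| < δ := hr'.trans_le (min_le_left _ _)
    have h2 : |r' - r| < r - a := hr'.trans_le ((min_le_right _ _).trans (min_le_left _ _))
    have h3 : |r' - r| < b - r := hr'.trans_le ((min_le_right _ _).trans (min_le_right _ _))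
    have har' : a < r' := by
      have := neg_lt_of_abs_lt h2; linarith
    have hr'b : r' < b := by
      have := lt_of_abs_lt h3; linarith
    have hr'0 : 0 < r' := ha.trans har'
    refine ⟨⟨har', hr'b⟩, fun x hx => ?_⟩
    rw [mem_sphere_zero_iff_norm] at hx
    apply hthick
    rw [Metric.mem_thickening_iff]
    refine ⟨(r / r') • x, ?_, ?_⟩
    · rw [mem_sphere_zero_iff_norm, norm_smul, hx, Real.norm_eq_abs,
        abs_of_pos (div_pos hr0 hr'0), div_mul_cancel₀ _ hr'0.ne']
    · have : x - (r / r') • x = (1 - r / r') • x := by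
        rw [sub_smul, one_smul]
      rw [dist_eq_norm, this, norm_smul, hx, Real.norm_eq_abs]
      calc |1 - r / r'| * r' = |(1 - r / r') * r'| := by
            rw [abs_mul, abs_of_pos hr'0]
        _ = |r' - r| := by rw [sub_mul, one_mul, div_mul_cancel₀ _ hr'0.ne']
        _ < δ := h1
  have hTmeas : MeasurableSet T := hTopen.measurableSet
  refine ⟨hTmeas, ?_⟩
  have hTIoi : T ⊆ Set.Ioi (0 : ℝ) := fun r hr => ha.trans hr.1.1
  -- the radial set
  set A : Set (EuclideanSpace ℝ (Fin N)) := (fun x : EuclideanSpace ℝ (Fin N) => ‖x‖) ⁻¹' T with hAdef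
  have hAU : A ⊆ U := fun x hx => hx.2 (by rw [mem_sphere_zero_iff_norm])
  have h0A : A ⊆ ({0}ᶜ : Set (EuclideanSpace ℝ (Fin N))) := by
    intro x hx
    simp only [Set.mem_compl_iff, Set.mem_singleton_iff]
    rintro rfl
    exact absurd (hTIoi hx) (by simp)
  set T' : Set (Set.Ioi (0 : ℝ)) := Subtype.val ⁻¹' T with hT'def
  have hT'meas : MeasurableSet T' := measurable_subtype_coe hTmeas
  have hdim : Module.finrank ℝ (EuclideanSpace ℝ (Fin N)) = N := finrank_euclideanSpace_fin
  have mp := (volume : Measure (EuclideanSpace ℝ (Fin N))).measurePreserving_homeomorphUnitSphereProd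
  have hpre : (homeomorphUnitSphereProd (EuclideanSpace ℝ (Fin N))) ⁻¹' (Set.univ ×ˢ T')
      = (Subtype.val ⁻¹' A : Set ({0}ᶜ : Set (EuclideanSpace ℝ (Fin N)))) := by
    ext x
    simp [hT'def, hAdef]
  have hcoeT' : (Subtype.val '' T' : Set ℝ) = T := by
    rw [hT'def, Subtype.image_preimage_coe, Set.inter_eq_right.2 hTIoi]
  have hsphere : (volume : Measure (EuclideanSpace ℝ (Fin N))).toSphere Set.univ = (N : ℝ≥0∞) * volume (Metric.ball (0 : EuclideanSpace ℝ (Fin N)) 1) := by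
    rw [Measure.toSphere_apply_univ, hdim]
  have hIoiPow : ENNReal.ofReal (a ^ (N - 1)) * volume T
      ≤ Measure.volumeIoiPow (N - 1) T' := by
    rw [Measure.volumeIoiPow, withDensity_apply _ hT'meas,
      setLIntegral_subtype measurableSet_Ioi T' (fun r : ℝ => ENNReal.ofReal (r ^ (N - 1))),
      hcoeT', ← setLIntegral_const]
    refine setLIntegral_mono (by fun_prop) fun r hr => ?_
    exact ENNReal.ofReal_le_ofReal (pow_le_pow_left₀ ha.le (le_of_lt hr.1.1) _)
  calc (N : ℝ≥0∞) * volume (Metric.ball (0 : EuclideanSpace ℝ (Fin N)) 1) * ENNReal.ofReal (a ^ (N - 1)) * volume T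
      ≤ (volume : Measure (EuclideanSpace ℝ (Fin N))).toSphere Set.univ * Measure.volumeIoiPow (N - 1) T' := by
        rw [hsphere, mul_assoc]
        exact mul_le_mul_right hIoiPow _
    _ = ((volume : Measure (EuclideanSpace ℝ (Fin N))).toSphere.prod (Measure.volumeIoiPow (Module.finrank ℝ (EuclideanSpace ℝ (Fin N)) - 1)))
          (Set.univ ×ˢ T') := by
        rw [Measure.prod_prod, hdim]
    _ = ((volume : Measure (EuclideanSpace ℝ (Fin N))).comap Subtype.val)
          ((homeomorphUnitSphereProd (EuclideanSpace ℝ (Fin N))) ⁻¹' (Set.univ ×ˢ T')) := by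
        rw [mp.measure_preimage (MeasurableSet.univ.prod hT'meas).nullMeasurableSet]
    _ = volume A := by
        rw [hpre, comap_subtype_coe_apply (measurableSet_singleton (0 : EuclideanSpace ℝ (Fin N))).compl,
          Subtype.image_preimage_coe, Set.inter_eq_right.2 h0A]
    _ ≤ volume U := measure_mono hAU
end

section
/- Let N ≥ 2 be an integer, let G be a symmetric N×N real matrix with operator norm ‖G − I‖ ≤ ε for some 0 ≤ ε < 1, where I is the identity. Let e_1, …, e_{N−1}, η be an orthonormal basis of ℝ^N (with respect to the Euclidean inner product ⟨·,·⟩), and suppose v ∈ ℝ^N satisfies ⟨G v, e_i⟩ = 0 for i = 1, …, N−1 and ⟨G v, v⟩ = 1. Then (1 − (N−1)ε²)/(1 + ε) ≤ ⟨v, η⟩² ≤ 1/(1 − ε). -/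
open scoped RealInnerProductSpace

/-!
Write `G = I + A` with `‖A‖ ≤ ε`. Then `1 = ⟨Gv, v⟩ = ‖v‖² + ⟨Av, v⟩` pins `‖v‖²` between
`1 / (1 + ε)` and `1 / (1 - ε)`, and `⟨v, e_i⟩ = -⟨Av, e_i⟩` makes every tangential coefficient
at most `ε ‖v‖` in size. Parseval then leaves at least `(1 - (N - 1) ε²) ‖v‖²` and at most
`‖v‖²` for `⟨v, η⟩²`.
-/

section NearIdentity

variable {E : Type*} [NormedAddCommGroup E] [InnerProductSpace ℝ E]
  {G : E →L[ℝ] E} {ε : ℝ}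

theorem abs_inner_apply_sub_inner_le (hG : ‖G - ContinuousLinearMap.id ℝ E‖ ≤ ε) (x y : E) :
    |⟪G x, y⟫ - ⟪x, y⟫| ≤ ε * ‖x‖ * ‖y‖ := by
  have hA : ⟪G x, y⟫ - ⟪x, y⟫ = ⟪(G - ContinuousLinearMap.id ℝ E) x, y⟫ := by
    rw [sub_apply, inner_sub_left, ContinuousLinearMap.id_apply]
  calc |⟪G x, y⟫ - ⟪x, y⟫|
      ≤ ‖(G - ContinuousLinearMap.id ℝ E) x‖ * ‖y‖ := hA ▸ abs_real_inner_le_norm _ _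
    _ ≤ ‖G - ContinuousLinearMap.id ℝ E‖ * ‖x‖ * ‖y‖ := by gcongr; exact ContinuousLinearMap.le_opNorm _ _
    _ ≤ ε * ‖x‖ * ‖y‖ := by gcongr

theorem abs_one_sub_norm_sq_le_of_inner_apply_self_eq_one
    (hG : ‖G - ContinuousLinearMap.id ℝ E‖ ≤ ε) {x : E} (hx : ⟪G x, x⟫ = 1) :
    |1 - ‖x‖ ^ 2| ≤ ε * ‖x‖ ^ 2 := by
  simpa [hx, real_inner_self_eq_norm_sq, mul_assoc, ← sq] using abs_inner_apply_sub_inner_le hG x x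

theorem sq_inner_le_of_inner_apply_eq_zero
    (hG : ‖G - ContinuousLinearMap.id ℝ E‖ ≤ ε) {x y : E} (hxy : ⟪G x, y⟫ = 0) :
    ⟪x, y⟫ ^ 2 ≤ (ε * ‖x‖ * ‖y‖) ^ 2 := by
  have h := abs_inner_apply_sub_inner_le hG x y
  rw [hxy, zero_sub, abs_neg] at h
  exact sq_le_sq' (abs_le.1 h).1 (abs_le.1 h).2

end NearIdentity

theorem OrthonormalBasis.norm_sq_sub_le_sq_inner {ι E : Type*} [Fintype ι]
    [NormedAddCommGroup E] [InnerProductSpace ℝ E] (B : OrthonormalBasis ι ℝ E) (x : E) (j : ι)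
    {δ : ℝ} (hδ : ∀ i ≠ j, ⟪x, B i⟫ ^ 2 ≤ δ) :
    ‖x‖ ^ 2 - ((Fintype.card ι : ℝ) - 1) * δ ≤ ⟪x, B j⟫ ^ 2 := by
  classical
  have hrest : ∑ i ∈ Finset.univ.erase j, ⟪x, B i⟫ ^ 2 ≤ ((Fintype.card ι : ℝ) - 1) * δ := by
    calc ∑ i ∈ Finset.univ.erase j, ⟪x, B i⟫ ^ 2
        ≤ ∑ _i ∈ Finset.univ.erase j, δ :=
          Finset.sum_le_sum fun i hi => hδ i (Finset.ne_of_mem_erase hi)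
      _ = ((Fintype.card ι : ℝ) - 1) * δ := by
          rw [Finset.sum_const, Finset.card_erase_of_mem (Finset.mem_univ j), nsmul_eq_mul,
            Finset.card_univ, Nat.cast_pred (Fintype.card_pos_iff.2 ⟨j⟩)]
  have hparseval := B.sum_sq_inner_left x
  rw [← Finset.add_sum_erase _ _ (Finset.mem_univ j)] at hparseval
  linarith

/-- Quantitative comparison of the `G`-unit normal with the Euclidean unit normal:
if `G` is a symmetric matrix with `‖G − I‖ ≤ ε < 1`, `e_1, …, e_{N−1}, η` is an
orthonormal basis of `ℝ^N`, and `v` satisfies `⟨Gv, e_i⟩ = 0` for `i = 1, …, N−1`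
and `⟨Gv, v⟩ = 1`, then `(1 − (N−1)ε²)/(1 + ε) ≤ ⟨v, η⟩² ≤ 1/(1 − ε)`. -/
theorem normal_comparison (N : ℕ) (hN : 2 ≤ N) (ε : ℝ) (hε1 : ε < 1)
    (G : EuclideanSpace ℝ (Fin N) →L[ℝ] EuclideanSpace ℝ (Fin N))
    (hGnorm : ‖G - ContinuousLinearMap.id ℝ (EuclideanSpace ℝ (Fin N))‖ ≤ ε)
    (b : Fin N → EuclideanSpace ℝ (Fin N)) (hb : Orthonormal ℝ b)
    (v : EuclideanSpace ℝ (Fin N))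
    (hv1 : ∀ i : Fin N, (i : ℕ) < N - 1 → ⟪G v, b i⟫ = 0)
    (hv2 : ⟪G v, v⟫ = 1) :
    (1 - ((N : ℝ) - 1) * ε ^ 2) / (1 + ε) ≤ ⟪v, b ⟨N - 1, by omega⟩⟫ ^ 2 ∧
      ⟪v, b ⟨N - 1, by omega⟩⟫ ^ 2 ≤ 1 / (1 - ε) := by
  set j : Fin N := ⟨N - 1, by omega⟩
  have hε0 : 0 ≤ ε := (norm_nonneg _).trans hGnorm
  let B := OrthonormalBasis.mk hb (hb.linearIndependent.span_eq_top_of_card_eq_finrank'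
    (by simp)).ge
  have hBb : ⇑B = b := OrthonormalBasis.coe_mk _ _
  have hnorm := abs_le.1 (abs_one_sub_norm_sq_le_of_inner_apply_self_eq_one hGnorm hv2)
  have htangential : ∀ i ≠ j, ⟪v, B i⟫ ^ 2 ≤ ε ^ 2 * ‖v‖ ^ 2 := fun i hij => by
    have hi : (i : ℕ) < N - 1 := by have := Fin.val_ne_of_ne hij; simp only [j] at this; omega
    simpa [hBb, hb.1 i, mul_pow] using sq_inner_le_of_inner_apply_eq_zero hGnorm (hv1 i hi)
  have hlower := B.norm_sq_sub_le_sq_inner v j htangential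
  have hupper : ⟪v, b j⟫ ^ 2 ≤ ‖v‖ ^ 2 := by
    simpa [hb.1 j, ← sq] using real_inner_mul_inner_self_le v (b j)
  rw [hBb, Fintype.card_fin] at hlower
  constructor
  · rw [div_le_iff₀ (by linarith)]
    rcases le_total (1 - ((N : ℝ) - 1) * ε ^ 2) 0 with hneg | hpos
    · nlinarith [sq_nonneg ⟪v, b j⟫]
    · nlinarith
  · rw [le_div_iff₀ (by linarith)]
    nlinarith
end
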